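/- Let n ≥ 3 be an integer and let k ≥ 1 be an integer. If h₁ and h₂ both satisfy hypotheses (H), h₁(r) ≤ h₂(r) for all r ∈ [0,R], and h₁(0) = h₂(0), then σ_(k)(g_{h₁}) ≤ σ_(k)(g_{h₂}). -/

import Mathlib

/-!
For a fixed admissible `a`, the numerator of `R_λ(a; h)` is monotone in `h`: its integrand is
`(a')² h^{n-1} + λ a² h^{n-3}` with `λ_(k) ≥ 0` and, since `n ≥ 3`, nonnegative exponents; the
denominator only involves `h(0)`, which is the same for `h₁` and `h₂`. Hence
`R_λ(a; h₁) ≤ R_λ(a; h₂)` for every admissible `a`, and the inequality passes to the infima.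
-/

open MeasureTheory Set

/-- Hypotheses (H): `h` is smooth on `[0,R]`, positive on `[0,R)`, `h(R)=0`,
`h'(R) = -1`, and all even-order derivatives of `h` vanish at `R`. -/
def SatisfiesH (R : ℝ) (h : ℝ → ℝ) : Prop :=
  ContDiffOn ℝ (⊤ : ℕ∞) h (Set.Icc 0 R) ∧
  (∀ r ∈ Set.Ico (0:ℝ) R, 0 < h r) ∧
  h R = 0 ∧
  derivWithin h (Set.Icc 0 R) R = -1 ∧
  ∀ k : ℕ, iteratedDerivWithin (2 * k) h (Set.Icc 0 R) R = 0

/-- The `k`-th distinct eigenvalue `λ_(k) = k (n + k - 2)` of the Laplacian on the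
round unit sphere `S^{n-1}`. -/
noncomputable def sphereEig (n k : ℕ) : ℝ := (k : ℝ) * ((n : ℝ) + (k : ℝ) - 2)

/-- The Rayleigh quotient
`R_λ(a; h) = (∫₀^R ((a')² h^{n-1} + λ a² h^{n-3}))/(a(0)² h(0)^{n-1})`. -/
noncomputable def rayleighQ (R : ℝ) (n : ℕ) (lam : ℝ) (h a : ℝ → ℝ) : ℝ :=
  (∫ r in (0:ℝ)..R,
      (deriv a r) ^ 2 * h r ^ ((n : ℤ) - 1) + lam * (a r) ^ 2 * h r ^ ((n : ℤ) - 3)) /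
    ((a 0) ^ 2 * h 0 ^ ((n : ℤ) - 1))

/-- Admissible test functions: Lipschitz on `[0,R]`, vanishing at `R`, nonzero at `0`. -/
def IsAdmissible (R : ℝ) (a : ℝ → ℝ) : Prop :=
  (∃ K : NNReal, LipschitzOnWith K a (Set.Icc 0 R)) ∧ a R = 0 ∧ a 0 ≠ 0

/-- The `k`-th distinct Steklov eigenvalue of the ball `[0,R] × S^{n-1}` with the
revolution metric `g_h`, characterized variationally. -/
noncomputable def steklov (R : ℝ) (n k : ℕ) (h : ℝ → ℝ) : ℝ :=
  sInf { v : ℝ | ∃ a : ℝ → ℝ, IsAdmissible R a ∧ v = rayleighQ R n (sphereEig n k) h a }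

/-- `a` is a minimizer realizing `σ_(k)(g_h)`. -/
def IsMinimizer (R : ℝ) (n k : ℕ) (h a : ℝ → ℝ) : Prop :=
  IsAdmissible R a ∧ rayleighQ R n (sphereEig n k) h a = steklov R n k h

theorem SatisfiesH.nonneg {R : ℝ} {h : ℝ → ℝ} (hH : SatisfiesH R h) :
    ∀ r ∈ Icc 0 R, 0 ≤ h r := by
  rintro r ⟨hr0, hrR⟩
  rcases hrR.lt_or_eq with hlt | rfl
  · exact (hH.2.1 r ⟨hr0, hlt⟩).le
  · exact hH.2.2.1.ge

theorem sphereEig_nonneg {n : ℕ} (hn : 2 ≤ n) (k : ℕ) : 0 ≤ sphereEig n k := by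
  have : (2 : ℝ) ≤ n := by exact_mod_cast hn
  exact mul_nonneg k.cast_nonneg (by linarith [k.cast_nonneg (α := ℝ)])

theorem isAdmissible_const_sub {R : ℝ} (hR : R ≠ 0) : IsAdmissible R (fun r => R - r) := by
  refine ⟨⟨1, ?_⟩, sub_self R, by simpa using hR⟩
  simpa using ((LipschitzWith.const R).sub LipschitzWith.id).lipschitzOnWith

theorem LipschitzOnWith.intervalIntegrable_deriv_sq_mul {a g : ℝ → ℝ} {K : NNReal} {x y : ℝ}
    (hxy : x ≤ y) (ha : LipschitzOnWith K a (Icc x y)) (hg : ContinuousOn g (Icc x y)) :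
    IntervalIntegrable (fun r => deriv a r ^ 2 * g r) volume x y := by
  rw [intervalIntegrable_iff_integrableOn_Ioo_of_le hxy]
  obtain ⟨C, hC⟩ := isCompact_Icc.exists_bound_of_continuousOn hg
  refine IntegrableOn.of_bound measure_Ioo_lt_top
    (((measurable_deriv a).aestronglyMeasurable.pow 2).mul
      ((hg.mono Ioo_subset_Icc_self).aestronglyMeasurable measurableSet_Ioo))
    (K ^ 2 * C) ?_
  filter_upwards [ae_restrict_mem measurableSet_Ioo] with r hr
  have hderiv : ‖deriv a r‖ ≤ K := norm_deriv_le_of_lipschitzOn (Icc_mem_nhds hr.1 hr.2) ha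
  rw [norm_mul, norm_pow]
  gcongr
  exact hC r (Ioo_subset_Icc_self hr)

theorem intervalIntegrable_rayleighQ_integrand {R : ℝ} (hR : 0 ≤ R) {n : ℕ} (hn : 3 ≤ n)
    (lam : ℝ) {h a : ℝ → ℝ} {K : NNReal} (hh : ContinuousOn h (Icc 0 R))
    (ha : LipschitzOnWith K a (Icc 0 R)) :
    IntervalIntegrable
      (fun r => deriv a r ^ 2 * h r ^ ((n : ℤ) - 1) + lam * a r ^ 2 * h r ^ ((n : ℤ) - 3))
      volume 0 R := by
  have hzpow : ∀ m : ℤ, 0 ≤ m → ContinuousOn (fun r => h r ^ m) (Icc 0 R) :=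
    fun m hm => hh.zpow₀ m fun _ _ => Or.inr hm
  refine (ha.intervalIntegrable_deriv_sq_mul hR (hzpow _ (by omega))).add ?_
  exact ContinuousOn.intervalIntegrable_of_Icc hR
    ((continuousOn_const.mul (ha.continuousOn.pow 2)).mul (hzpow _ (by omega)))

theorem rayleighQ_nonneg {R : ℝ} (hR : 0 ≤ R) (n : ℕ) {lam : ℝ} (hlam : 0 ≤ lam) {h : ℝ → ℝ}
    (hh : ∀ r ∈ Icc 0 R, 0 ≤ h r) (a : ℝ → ℝ) : 0 ≤ rayleighQ R n lam h a := by
  have h0 := zpow_nonneg (hh 0 ⟨le_rfl, hR⟩) ((n : ℤ) - 1)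
  refine div_nonneg (intervalIntegral.integral_nonneg hR fun r hr => ?_) (by positivity)
  have h1 := zpow_nonneg (hh r hr) ((n : ℤ) - 1)
  have h3 := zpow_nonneg (hh r hr) ((n : ℤ) - 3)
  positivity

theorem rayleighQ_mono {R : ℝ} (hR : 0 ≤ R) {n : ℕ} (hn : 3 ≤ n) {lam : ℝ} (hlam : 0 ≤ lam)
    {h₁ h₂ a : ℝ → ℝ} (hc₁ : ContinuousOn h₁ (Icc 0 R)) (hc₂ : ContinuousOn h₂ (Icc 0 R))
    (hnonneg : ∀ r ∈ Icc 0 R, 0 ≤ h₁ r) (hle : ∀ r ∈ Icc 0 R, h₁ r ≤ h₂ r) (h0 : h₁ 0 = h₂ 0)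
    (ha : ∃ K, LipschitzOnWith K a (Icc 0 R)) :
    rayleighQ R n lam h₁ a ≤ rayleighQ R n lam h₂ a := by
  obtain ⟨K, ha⟩ := ha
  unfold rayleighQ
  rw [h0]
  have hden := zpow_nonneg ((hnonneg 0 ⟨le_rfl, hR⟩).trans (hle 0 ⟨le_rfl, hR⟩)) ((n : ℤ) - 1)
  refine div_le_div_of_nonneg_right ?_ (by positivity)
  refine intervalIntegral.integral_mono_on hR
    (intervalIntegrable_rayleighQ_integrand hR hn lam hc₁ ha)
    (intervalIntegrable_rayleighQ_integrand hR hn lam hc₂ ha) fun r hr => ?_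
  have hmono : ∀ m : ℤ, 0 ≤ m → h₁ r ^ m ≤ h₂ r ^ m :=
    fun m hm => zpow_le_zpow_left₀ hm (hnonneg r hr) (hle r hr)
  gcongr
  · exact hmono _ (by omega)
  · exact hmono _ (by omega)

theorem csInf_setOf_exists_le {α : Type*} {P : α → Prop} {f g : α → ℝ} (hP : ∃ a, P a)
    (hf : BddBelow {v | ∃ a, P a ∧ v = f a}) (hfg : ∀ a, P a → f a ≤ g a) :
    sInf {v | ∃ a, P a ∧ v = f a} ≤ sInf {v | ∃ a, P a ∧ v = g a} := by
  obtain ⟨a₀, ha₀⟩ := hP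
  refine le_csInf ⟨g a₀, a₀, ha₀, rfl⟩ ?_
  rintro _ ⟨a, ha, rfl⟩
  exact (csInf_le hf ⟨a, ha, rfl⟩).trans (hfg a ha)

theorem stmt_10_general (n : ℕ) (hn : 3 ≤ n) (R : ℝ) (hR : 0 < R) (k : ℕ)
    (h₁ h₂ : ℝ → ℝ) (hH1 : SatisfiesH R h₁) (hH2 : SatisfiesH R h₂)
    (hle : ∀ r ∈ Set.Icc (0:ℝ) R, h₁ r ≤ h₂ r) (h0 : h₁ 0 = h₂ 0) :
    steklov R n k h₁ ≤ steklov R n k h₂ := by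
  have hlam := sphereEig_nonneg (by omega : 2 ≤ n) k
  refine csInf_setOf_exists_le ⟨_, isAdmissible_const_sub hR.ne'⟩ ⟨0, ?_⟩ fun a ha => ?_
  · rintro _ ⟨a, -, rfl⟩
    exact rayleighQ_nonneg hR.le n hlam hH1.nonneg a
  · exact rayleighQ_mono hR.le hn hlam hH1.1.continuousOn hH2.1.continuousOn hH1.nonneg hle h0
      ha.1

theorem stmt_10 (n : ℕ) (hn : 3 ≤ n) (R : ℝ) (hR : 0 < R) (k : ℕ) (hk : 1 ≤ k)
    (h₁ h₂ : ℝ → ℝ) (hH1 : SatisfiesH R h₁) (hH2 : SatisfiesH R h₂)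
    (hle : ∀ r ∈ Set.Icc (0:ℝ) R, h₁ r ≤ h₂ r) (h0 : h₁ 0 = h₂ 0) :
    steklov R n k h₁ ≤ steklov R n k h₂ :=
  stmt_10_general n hn R hR k h₁ h₂ hH1 hH2 hle h0
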